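/- Let d ≥ 1 and let Ψ be a growth function of order p ∈ (0,1], additionally strictly increasing with inverse Ψ^{-1}. Let φ be a Schwartz function on ℝ^d whose Fourier transform satisfies φ̂(ξ) = 1 for all |ξ| ≤ 1, and for t > 0 set φ_t(x) := t^{−d} φ(x/t). For f ∈ L¹(ℝ^d) define the non-tangential maximal function M*f(x) := sup{ |(f ∗ φ_t)(y)| : t > 0, y ∈ ℝ^d, |y − x| < t }. If ∫_{ℝ^d} Ψ( M*f(x) ) dx ≤ 1, then for every ξ ∈ ℝ^d with ξ ≠ 0, |f̂(ξ)| ≤ Ψ^{-1}( a_d |ξ|^d ) / ( a_d |ξ|^d ), where a_d := 1/|B(0,1)| is the reciprocal of the volume of the unit ball in ℝ^d and f̂(ξ) = ∫ f(x) e^{−2πi x·ξ} dx. -/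

import Mathlib

open MeasureTheory
open scoped ENNReal RealInnerProductSpace

noncomputable section

/-- `Ψ : [0,∞) → [0,∞)` is a growth function of order `p ∈ (0,1]`. -/
def IsGrowthOfOrder (Ψ : ℝ → ℝ) (p : ℝ) : Prop :=
  (∀ t, 0 ≤ t → 0 ≤ Ψ t) ∧
  ContinuousOn Ψ (Set.Ici 0) ∧ MonotoneOn Ψ (Set.Ici 0) ∧ Ψ 0 = 0 ∧
  Filter.Tendsto Ψ Filter.atTop Filter.atTop ∧
  AntitoneOn (fun t => Ψ t / t) (Set.Ioi 0) ∧
  ∃ c : ℝ, 0 < c ∧ ∀ t, 0 ≤ t → ∀ s ∈ Set.Ioo (0:ℝ) 1, Ψ (s * t) ≤ c * s ^ p * Ψ t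

/-- `Ψinv` is the (two-sided) inverse of `Ψ` on `[0,∞)`. -/
def IsGrowthInverse (Ψ Ψinv : ℝ → ℝ) : Prop :=
  StrictMonoOn Ψ (Set.Ici 0) ∧ (∀ t, 0 ≤ t → 0 ≤ Ψinv t) ∧
  (∀ t, 0 ≤ t → Ψinv (Ψ t) = t) ∧ (∀ t, 0 ≤ t → Ψ (Ψinv t) = t)

/-- The Fourier transform `f̂(ξ) = ∫ f(x) e^{-2πi⟨x,ξ⟩} dx` on `ℝ^d`. -/
def fourierT {d : ℕ} (f : EuclideanSpace ℝ (Fin d) → ℂ) (ξ : EuclideanSpace ℝ (Fin d)) : ℂ :=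
  ∫ x : EuclideanSpace ℝ (Fin d), f x * Complex.exp (-(2 * Real.pi * ⟪x, ξ⟫) * Complex.I)

/-- The dilation `φ_t(x) = t^{-d} φ(x/t)` and the convolution `(f ∗ φ_t)(y)`. -/
def dilConv {d : ℕ} (f : EuclideanSpace ℝ (Fin d) → ℂ)
    (φ : EuclideanSpace ℝ (Fin d) → ℝ) (t : ℝ) (y : EuclideanSpace ℝ (Fin d)) : ℂ :=
  ∫ x : EuclideanSpace ℝ (Fin d), f x * ((t ^ (d:ℕ))⁻¹ * φ (t⁻¹ • (y - x)) : ℝ)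

end

noncomputable section Aux

/-- The character `e^{-2πi⟨y,ξ⟩}`. -/
def eChar {d : ℕ} (ξ y : EuclideanSpace ℝ (Fin d)) : ℂ :=
  Complex.exp (-(2 * Real.pi * ⟪y, ξ⟫) * Complex.I)

lemma fourierT_eq_eChar {d : ℕ} (f : EuclideanSpace ℝ (Fin d) → ℂ)
    (ξ : EuclideanSpace ℝ (Fin d)) :
    fourierT f ξ = ∫ x : EuclideanSpace ℝ (Fin d), f x * eChar ξ x := rfl

lemma eChar_norm {d : ℕ} (ξ y : EuclideanSpace ℝ (Fin d)) : ‖eChar ξ y‖ = 1 := by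
  unfold eChar
  rw [Complex.norm_exp]
  simp

lemma eChar_continuous {d : ℕ} (ξ : EuclideanSpace ℝ (Fin d)) : Continuous (eChar ξ) := by
  unfold eChar
  have h : Continuous fun y : EuclideanSpace ℝ (Fin d) => (⟪y, ξ⟫ : ℝ) :=
    continuous_id.inner continuous_const
  exact Complex.continuous_exp.comp
    (((continuous_const.mul (Complex.continuous_ofReal.comp h)).neg).mul continuous_const)

lemma eChar_add {d : ℕ} (ξ y x : EuclideanSpace ℝ (Fin d)) :
    eChar ξ (y + x) = eChar ξ y * eChar ξ x := by
  unfold eChar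
  rw [← Complex.exp_add]
  congr 1
  rw [inner_add_left]
  push_cast
  ring

lemma eChar_smul {d : ℕ} (ξ y : EuclideanSpace ℝ (Fin d)) (t : ℝ) :
    eChar ξ (t • y) = eChar (t • ξ) y := by
  unfold eChar; congr 2; rw [real_inner_smul_left, real_inner_smul_right]

lemma fourierT_dil {d : ℕ} (φ : EuclideanSpace ℝ (Fin d) → ℝ) {t : ℝ} (ht : 0 < t)
    (ξ : EuclideanSpace ℝ (Fin d)) :
    fourierT (fun x => (((t ^ d)⁻¹ * φ (t⁻¹ • x) : ℝ) : ℂ)) ξ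
      = fourierT (fun x => (φ x : ℂ)) (t • ξ) := by
  have key := Measure.integral_comp_smul_of_nonneg (volume)
      (fun x : EuclideanSpace ℝ (Fin d) =>
        (((t ^ d)⁻¹ * φ (t⁻¹ • x) : ℝ) : ℂ) * eChar ξ x) t (hR := ht.le)
  rw [finrank_euclideanSpace_fin] at key
  have h1 : ∀ x : EuclideanSpace ℝ (Fin d),
      (((t ^ d)⁻¹ * φ (t⁻¹ • (t • x)) : ℝ) : ℂ) * eChar ξ (t • x)
        = ((t ^ d)⁻¹ : ℝ) • ((φ x : ℂ) * eChar (t • ξ) x) := by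
    intro x
    rw [smul_smul, inv_mul_cancel₀ ht.ne', one_smul, eChar_smul]
    push_cast
    rw [Complex.real_smul]
    push_cast
    ring
  rw [fourierT_eq_eChar, fourierT_eq_eChar]
  simp_rw [h1] at key
  rw [integral_smul] at key
  have ht' : ((t ^ d : ℝ))⁻¹ ≠ 0 := by positivity
  exact (smul_right_injective ℂ ht' key).symm

lemma conv_integrand_integrable {d : ℕ} (f : EuclideanSpace ℝ (Fin d) → ℂ)
    (hf : Integrable f) (φ : SchwartzMap (EuclideanSpace ℝ (Fin d)) ℝ) {t : ℝ} (ht : 0 < t) :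
    Integrable (fun p : EuclideanSpace ℝ (Fin d) × EuclideanSpace ℝ (Fin d) =>
      ((t ^ d)⁻¹ * φ (t⁻¹ • (p.1 - p.2)) : ℝ) • f p.2) (volume.prod volume) := by
  have hK : Integrable (fun z : EuclideanSpace ℝ (Fin d) => ((t ^ d)⁻¹ * φ (t⁻¹ • z) : ℝ)) :=
    (φ.integrable.comp_smul (inv_ne_zero ht.ne')).const_mul _
  exact hf.convolution_integrand
    ((ContinuousLinearMap.lsmul ℝ ℝ : ℝ →L[ℝ] ℂ →L[ℝ] ℂ).flip) hK

lemma dilConv_eq_smul_integral {d : ℕ} (f : EuclideanSpace ℝ (Fin d) → ℂ)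
    (φ : SchwartzMap (EuclideanSpace ℝ (Fin d)) ℝ) (t : ℝ) (y : EuclideanSpace ℝ (Fin d)) :
    dilConv f (fun z => φ z) t y
      = ∫ x : EuclideanSpace ℝ (Fin d), ((t ^ d)⁻¹ * φ (t⁻¹ • (y - x)) : ℝ) • f x := by
  unfold dilConv
  refine integral_congr_ae (Filter.Eventually.of_forall fun x => ?_)
  show f x * (((t ^ d)⁻¹ * φ (t⁻¹ • (y - x)) : ℝ) : ℂ)
      = ((t ^ d)⁻¹ * φ (t⁻¹ • (y - x)) : ℝ) • f x
  rw [Complex.real_smul, mul_comm]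

lemma dilConv_integrable {d : ℕ} (f : EuclideanSpace ℝ (Fin d) → ℂ)
    (hf : Integrable f) (φ : SchwartzMap (EuclideanSpace ℝ (Fin d)) ℝ) {t : ℝ} (ht : 0 < t) :
    Integrable (fun y => dilConv f (fun z => φ z) t y) := by
  have h1 := (conv_integrand_integrable f hf φ ht).integral_prod_left
  exact h1.congr (Filter.Eventually.of_forall fun y => (dilConv_eq_smul_integral f φ t y).symm)

/-- Fubini identity: `f̂(ξ) = ∫ (f ∗ φ_t)(y) e^{-2πi⟨y,ξ⟩} dy` when `φ̂_t(ξ) = 1`. -/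
lemma fourierT_eq_integral_dilConv {d : ℕ} (f : EuclideanSpace ℝ (Fin d) → ℂ)
    (hf : Integrable f) (φ : SchwartzMap (EuclideanSpace ℝ (Fin d)) ℝ) {t : ℝ} (ht : 0 < t)
    (ξ : EuclideanSpace ℝ (Fin d))
    (hK1 : fourierT (fun x => (((t ^ d)⁻¹ * φ (t⁻¹ • x) : ℝ) : ℂ)) ξ = 1) :
    fourierT f ξ = ∫ y : EuclideanSpace ℝ (Fin d),
      dilConv f (fun z => φ z) t y * eChar ξ y := by
  set K : EuclideanSpace ℝ (Fin d) → ℝ := fun z => (t ^ d)⁻¹ * φ (t⁻¹ • z) with hKdef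
  have h1 : Integrable
      (fun p : EuclideanSpace ℝ (Fin d) × EuclideanSpace ℝ (Fin d) => K (p.1 - p.2) • f p.2)
      (volume.prod volume) := conv_integrand_integrable f hf φ ht
  have hF : Integrable
      (fun p : EuclideanSpace ℝ (Fin d) × EuclideanSpace ℝ (Fin d) =>
        (K (p.1 - p.2) • f p.2) * eChar ξ p.1) (volume.prod volume) := by
    have := h1.bdd_mul ((eChar_continuous ξ).comp continuous_fst).aestronglyMeasurable
      (Filter.Eventually.of_forall fun p => le_of_eq (eChar_norm ξ p.1))
    exact this.congr (Filter.Eventually.of_forall fun p => mul_comm _ _)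
  have step1 : (∫ y : EuclideanSpace ℝ (Fin d), dilConv f (fun z => φ z) t y * eChar ξ y)
      = ∫ y : EuclideanSpace ℝ (Fin d), ∫ x : EuclideanSpace ℝ (Fin d),
          (K (y - x) • f x) * eChar ξ y := by
    refine integral_congr_ae (Filter.Eventually.of_forall fun y => ?_)
    show dilConv f (fun z => φ z) t y * eChar ξ y = _
    rw [dilConv_eq_smul_integral f φ t y]
    exact (integral_mul_const _ _).symm
  have step2 : (∫ y : EuclideanSpace ℝ (Fin d), ∫ x : EuclideanSpace ℝ (Fin d),
          (K (y - x) • f x) * eChar ξ y)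
      = ∫ x : EuclideanSpace ℝ (Fin d), ∫ y : EuclideanSpace ℝ (Fin d),
          (K (y - x) • f x) * eChar ξ y :=
    integral_integral_swap hF
  have step3 : ∀ x : EuclideanSpace ℝ (Fin d),
      (∫ y : EuclideanSpace ℝ (Fin d), (K (y - x) • f x) * eChar ξ y)
        = f x * eChar ξ x := by
    intro x
    have hsh := integral_add_right_eq_self (μ := volume)
      (fun y : EuclideanSpace ℝ (Fin d) => (K (y - x) • f x) * eChar ξ y) x
    rw [← hsh]
    have hpt : ∀ y : EuclideanSpace ℝ (Fin d), (K (y + x - x) • f x) * eChar ξ (y + x)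
        = (f x * eChar ξ x) * ((K y : ℝ) * eChar ξ y) := by
      intro y
      rw [add_sub_cancel_right, eChar_add, Complex.real_smul]
      ring
    simp_rw [hpt]
    rw [integral_const_mul]
    have hKf : (∫ y : EuclideanSpace ℝ (Fin d), ((K y : ℝ) : ℂ) * eChar ξ y)
        = fourierT (fun x => (((t ^ d)⁻¹ * φ (t⁻¹ • x) : ℝ) : ℂ)) ξ := rfl
    rw [hKf, hK1, mul_one]
  rw [step1, step2]
  simp_rw [step3]
  exact fourierT_eq_eChar f ξ

end Aux


/-- pointwise Fourier bound on `H^Ψ(ℝ^d)`: let `φ` be Schwartz with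
`φ̂ = 1` on the unit ball, and `M*f` the associated non-tangential maximal function
(formalised via an arbitrary pointwise majorant `Mf` of `|(f ∗ φ_t)(y)|`, `|y-x| < t`;
the maximal function itself is the least such). If `∫ Ψ(M*f) ≤ 1` then
`|f̂(ξ)| ≤ Ψ⁻¹(a_d|ξ|^d)/(a_d|ξ|^d)` for `ξ ≠ 0`, where `a_d = |B(0,1)|⁻¹`. -/
theorem stmt_14 (d : ℕ) (hd : 1 ≤ d) (Ψ Ψinv : ℝ → ℝ) (p : ℝ) (hp : p ∈ Set.Ioc (0:ℝ) 1)
    (hΨ : IsGrowthOfOrder Ψ p) (hinv : IsGrowthInverse Ψ Ψinv)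
    (φ : SchwartzMap (EuclideanSpace ℝ (Fin d)) ℝ)
    (hφ : ∀ ξ : EuclideanSpace ℝ (Fin d), ‖ξ‖ ≤ 1 → fourierT (fun x => (φ x : ℂ)) ξ = 1)
    (f : EuclideanSpace ℝ (Fin d) → ℂ) (hf : Integrable f)
    (Mf : EuclideanSpace ℝ (Fin d) → ℝ)
    (hMf : ∀ (x y : EuclideanSpace ℝ (Fin d)) (t : ℝ), 0 < t → ‖y - x‖ < t →
      ‖dilConv f (fun z => φ z) t y‖ ≤ Mf x)
    (hint : (∫⁻ x : EuclideanSpace ℝ (Fin d), ENNReal.ofReal (Ψ (Mf x))) ≤ 1) :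
    ∀ ξ : EuclideanSpace ℝ (Fin d), ξ ≠ 0 →
      ‖fourierT f ξ‖ ≤
        Ψinv (((volume (Metric.ball (0 : EuclideanSpace ℝ (Fin d)) 1)).toReal)⁻¹ * ‖ξ‖ ^ d) /
          (((volume (Metric.ball (0 : EuclideanSpace ℝ (Fin d)) 1)).toReal)⁻¹ * ‖ξ‖ ^ d) := by
  intro ξ hξ
  haveI : Nontrivial (EuclideanSpace ℝ (Fin d)) := by
    refine Module.finrank_pos_iff (R := ℝ) |>.mp ?_
    rw [finrank_euclideanSpace_fin]; omega
  have hVfin : volume (Metric.ball (0 : EuclideanSpace ℝ (Fin d)) 1) ≠ ∞ :=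
    measure_ball_lt_top.ne
  have hVne : volume (Metric.ball (0 : EuclideanSpace ℝ (Fin d)) 1) ≠ 0 :=
    (Metric.measure_ball_pos volume 0 one_pos).ne'
  set V : ℝ := (volume (Metric.ball (0 : EuclideanSpace ℝ (Fin d)) 1)).toReal with hVdef
  have hV : 0 < V := ENNReal.toReal_pos hVne hVfin
  have hξn : 0 < ‖ξ‖ := norm_pos_iff.mpr hξ
  set a : ℝ := V⁻¹ * ‖ξ‖ ^ d with hadef
  have ha : 0 < a := by positivity
  set t : ℝ := ‖ξ‖⁻¹ with htdef
  have ht : 0 < t := by positivity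
  set M : ℝ := Ψinv a with hMdef
  have hMnn : 0 ≤ M := hinv.2.1 a ha.le
  have hΨM : Ψ M = a := hinv.2.2.2 a ha.le
  have hΨ0 : Ψ 0 = 0 := hΨ.2.2.2.1
  have hMpos : 0 < M := by
    rcases hMnn.eq_or_lt with h | h
    · exfalso; rw [← h] at hΨM; rw [hΨ0] at hΨM; exact ha.ne hΨM
    · exact h
  set g : EuclideanSpace ℝ (Fin d) → ℂ := fun y => dilConv f (fun z => φ z) t y with hgdef
  have hMf0 : ∀ x, 0 ≤ Mf x := fun x =>
    (norm_nonneg _).trans (hMf x x t ht (by simpa using ht))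
  have hgM : ∀ y, ‖g y‖ ≤ Mf y := fun y => hMf y y t ht (by simpa using ht)
  -- Step A : Ψ (‖g y‖) ≤ a for every y
  have hΨg_le : ∀ y, Ψ ‖g y‖ ≤ a := by
    intro y
    have hball : ∀ x ∈ Metric.ball y t,
        ENNReal.ofReal (Ψ ‖g y‖) ≤ ENNReal.ofReal (Ψ (Mf x)) := by
      intro x hx
      have hyx : ‖y - x‖ < t := by
        rw [Metric.mem_ball, dist_comm, dist_eq_norm] at hx
        exact hx
      exact ENNReal.ofReal_le_ofReal
        (hΨ.2.2.1 (Set.mem_Ici.mpr (norm_nonneg _)) (Set.mem_Ici.mpr (hMf0 x))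
          (hMf x y t ht hyx))
    have h2 : ENNReal.ofReal (Ψ ‖g y‖) * volume (Metric.ball y t) ≤ 1 := by
      calc ENNReal.ofReal (Ψ ‖g y‖) * volume (Metric.ball y t)
          = ∫⁻ _ in Metric.ball y t, ENNReal.ofReal (Ψ ‖g y‖) :=
            (setLIntegral_const _ _).symm
        _ ≤ ∫⁻ x in Metric.ball y t, ENNReal.ofReal (Ψ (Mf x)) :=
            lintegral_mono_ae (ae_restrict_of_forall_mem Metric.isOpen_ball.measurableSet hball)
        _ ≤ ∫⁻ x, ENNReal.ofReal (Ψ (Mf x)) := setLIntegral_le_lintegral _ _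
        _ ≤ 1 := hint
    have hble : ENNReal.ofReal (Ψ ‖g y‖) ≤ (volume (Metric.ball y t))⁻¹ :=
      ENNReal.le_inv_iff_mul_le.mpr h2
    have hbne : volume (Metric.ball y t) ≠ 0 := (Metric.measure_ball_pos volume y ht).ne'
    have hbfin : volume (Metric.ball y t) ≠ ∞ := measure_ball_lt_top.ne
    have hinvne : (volume (Metric.ball y t))⁻¹ ≠ ∞ := ENNReal.inv_ne_top.mpr hbne
    have h3 : Ψ ‖g y‖ ≤ ((volume (Metric.ball y t))⁻¹).toReal :=
      (ENNReal.ofReal_le_iff_le_toReal hinvne).mp hble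
    have hballvol : volume (Metric.ball y t)
        = ENNReal.ofReal (t ^ d) * volume (Metric.ball (0 : EuclideanSpace ℝ (Fin d)) 1) := by
      rw [Measure.addHaar_ball volume y ht.le, finrank_euclideanSpace_fin]
    have htd : ((t : ℝ) ^ d)⁻¹ = ‖ξ‖ ^ d := by
      rw [htdef, inv_pow, inv_inv]
    have h4 : ((volume (Metric.ball y t))⁻¹).toReal = a := by
      rw [hballvol, ENNReal.toReal_inv, ENNReal.toReal_mul,
        ENNReal.toReal_ofReal (by positivity : (0:ℝ) ≤ t ^ d), ← hVdef,
        mul_inv, htd, hadef, mul_comm]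
    rw [h4] at h3
    exact h3
  -- uniform bound ‖g y‖ ≤ M
  have hgleM : ∀ y, ‖g y‖ ≤ M := by
    intro y
    by_contra h
    push_neg at h
    have := hinv.1 (Set.mem_Ici.mpr hMnn) (Set.mem_Ici.mpr (norm_nonneg _)) h
    rw [hΨM] at this
    exact absurd (hΨg_le y) (not_le.mpr this)
  -- Step B : pointwise bound ‖g y‖ ≤ (M/a) * Ψ (Mf y)
  have hMa : (0:ℝ) ≤ M / a := div_nonneg hMnn ha.le
  have hptw : ∀ y, ‖g y‖ ≤ M / a * Ψ (Mf y) := by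
    intro y
    have h1 : ‖g y‖ ≤ M / a * Ψ ‖g y‖ := by
      rcases (norm_nonneg (g y)).eq_or_lt with h0 | h0
      · rw [← h0, hΨ0, mul_zero]
      · have hanti := hΨ.2.2.2.2.2.1 (Set.mem_Ioi.mpr h0) (Set.mem_Ioi.mpr hMpos) (hgleM y)
        dsimp only at hanti
        rw [hΨM] at hanti
        rw [div_le_div_iff₀ hMpos h0] at hanti
        rw [div_mul_eq_mul_div, le_div_iff₀ ha]
        nlinarith [hanti]
    refine h1.trans (mul_le_mul_of_nonneg_left ?_ hMa)
    exact hΨ.2.2.1 (Set.mem_Ici.mpr (norm_nonneg _)) (Set.mem_Ici.mpr (hMf0 y)) (hgM y)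
  -- Fourier identity
  have hts : ‖t • ξ‖ = 1 := by
    rw [norm_smul, htdef, Real.norm_eq_abs, abs_of_pos (by positivity : (0:ℝ) < ‖ξ‖⁻¹),
      inv_mul_cancel₀ hξn.ne']
  have hK1 : fourierT (fun x => (((t ^ d)⁻¹ * φ (t⁻¹ • x) : ℝ) : ℂ)) ξ = 1 := by
    rw [fourierT_dil (fun z => φ z) ht ξ]
    exact hφ _ hts.le
  have hid := fourierT_eq_integral_dilConv f hf φ ht ξ hK1
  have hg : Integrable g := dilConv_integrable f hf φ ht
  -- Final chain
  calc ‖fourierT f ξ‖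
      = ‖∫ y : EuclideanSpace ℝ (Fin d), g y * eChar ξ y‖ := by rw [hid]
    _ ≤ ∫ y : EuclideanSpace ℝ (Fin d), ‖g y * eChar ξ y‖ := norm_integral_le_integral_norm _
    _ = ∫ y : EuclideanSpace ℝ (Fin d), ‖g y‖ := by
        refine integral_congr_ae (Filter.Eventually.of_forall fun y => ?_)
        show ‖g y * eChar ξ y‖ = ‖g y‖
        rw [norm_mul, eChar_norm, mul_one]
    _ = (∫⁻ y : EuclideanSpace ℝ (Fin d), ENNReal.ofReal ‖g y‖).toReal :=
        integral_eq_lintegral_of_nonneg_ae (Filter.Eventually.of_forall fun y => norm_nonneg _)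
          hg.norm.aestronglyMeasurable
    _ ≤ M / a := by
        refine ENNReal.toReal_le_of_le_ofReal hMa ?_
        calc (∫⁻ y : EuclideanSpace ℝ (Fin d), ENNReal.ofReal ‖g y‖)
            ≤ ∫⁻ y : EuclideanSpace ℝ (Fin d),
                ENNReal.ofReal (M / a) * ENNReal.ofReal (Ψ (Mf y)) := by
              refine lintegral_mono fun y => ?_
              rw [← ENNReal.ofReal_mul hMa]
              exact ENNReal.ofReal_le_ofReal (hptw y)
          _ = ENNReal.ofReal (M / a) *
                ∫⁻ y : EuclideanSpace ℝ (Fin d), ENNReal.ofReal (Ψ (Mf y)) :=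
              lintegral_const_mul' _ _ ENNReal.ofReal_ne_top
          _ ≤ ENNReal.ofReal (M / a) * 1 := mul_le_mul_right hint _
          _ = ENNReal.ofReal (M / a) := mul_one _
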